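/- For every integer n ≥ 1, every semigroup endomorphism of the Brandt semigroup B_n is either an automorphism of B_n or a constant map whose value is an idempotent of B_n; that is, End(B_n) = Aut(B_n) ∪ C_{I(B_n)}. -/

import Mathlib

/-- The underlying set of the Brandt semigroup `B_n`: pairs `(i,j)` with
`i, j ∈ [n]` together with the zero element `θ` (represented by `none`). -/
abbrev Brandt (n : ℕ) := Option (Fin n × Fin n)

/-- The Brandt semigroup operation: `(i,j) + (k,l) = (i,l)` if `j = k`, and `θ`
otherwise; `θ` is a two-sided zero. -/
def bmul {n : ℕ} : Brandt n → Brandt n → Brandt n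
  | some (i, j), some (k, l) => if j = k then some (i, l) else none
  | _, _ => none

instance {n : ℕ} : Mul (Brandt n) := ⟨bmul⟩

@[simp] lemma brandt_mul_def {n : ℕ} (x y : Brandt n) : x * y = bmul x y := rfl

/-- A map `B_n → B_n` is a (semigroup) endomorphism if it preserves the operation. -/
def IsEndo {n : ℕ} (f : Brandt n → Brandt n) : Prop :=
  ∀ x y : Brandt n, f (x * y) = f x * f y

lemma mul_none' {n : ℕ} (x : Brandt n) : x * none = none := by
  cases x with
  | none => rfl
  | some p => obtain ⟨i, j⟩ := p; rfl

lemma none_mul' {n : ℕ} (x : Brandt n) : (none : Brandt n) * x = none := rfl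

lemma mul_match {n : ℕ} (i j l : Fin n) :
    (some (i, j) : Brandt n) * some (j, l) = some (i, l) := by
  simp [bmul]

lemma mul_mismatch {n : ℕ} {j k : Fin n} (i l : Fin n) (h : j ≠ k) :
    (some (i, j) : Brandt n) * some (k, l) = none := by
  simp [bmul, h]

/-- For every `n ≥ 1`, every endomorphism of the Brandt semigroup `B_n` is either
an automorphism (a bijective endomorphism) or a constant map whose value is an
idempotent of `B_n`; that is, `End(B_n) = Aut(B_n) ∪ C_{I(B_n)}`. -/
theorem endBn_eq_aut_union_idempotent_constants (n : ℕ) (hn : 1 ≤ n)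
    (f : Brandt n → Brandt n) (hf : IsEndo f) :
    Function.Bijective f ∨ ∃ α : Brandt n, α * α = α ∧ ∀ x : Brandt n, f x = α := by
  have hid : f none * f none = f none := by
    have h := hf none none
    rw [none_mul'] at h
    exact h.symm
  cases hθ : f none with
  | some q =>
    obtain ⟨k, k'⟩ := q
    rw [hθ] at hid
    have hkk : k' = k := by
      by_contra h
      rw [mul_mismatch _ _ h] at hid
      exact nomatch hid
    subst hkk
    -- so f none = some (k', k'); f is constant equal to it
    right
    refine ⟨some (k', k'), mul_match _ _ _, ?_⟩
    intro x
    have h1 := hf none x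
    have h2 := hf x none
    rw [none_mul', hθ] at h1
    rw [mul_none', hθ] at h2
    cases hx : f x with
    | none =>
      rw [hx, mul_none'] at h1
      exact nomatch h1
    | some p =>
      obtain ⟨a, b⟩ := p
      rw [hx] at h1 h2
      by_cases hka : k' = a
      · subst hka
        rw [mul_match] at h1
        -- h1 : some (k', k') = some (k', b)
        have hb : b = k' := by
          have := (Option.some.injEq _ _).mp h1
          exact (Prod.mk.injEq _ _ _ _ |>.mp this).2.symm
        subst hb; rfl
      · rw [mul_mismatch _ _ hka] at h1
        exact nomatch h1
  | none =>
    by_cases hz : ∃ p : Fin n × Fin n, f (some p) = none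
    · -- f is constant none
      right
      obtain ⟨⟨i, j⟩, hij⟩ := hz
      have hii : f (some (i, i)) = none := by
        have h := hf (some (i, j)) (some (j, i))
        rw [mul_match, hij, none_mul'] at h
        exact h
      have hki : ∀ k : Fin n, f (some (k, i)) = none := by
        intro k
        have h := hf (some (k, i)) (some (i, i))
        rw [mul_match, hii, mul_none'] at h
        exact h
      refine ⟨none, rfl, ?_⟩
      intro x
      cases x with
      | none => exact hθ
      | some p =>
        obtain ⟨k, l⟩ := p
        have h := hf (some (k, i)) (some (i, l))
        rw [mul_match, hki k, none_mul'] at h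
        exact h
    · -- f is bijective
      left
      push_neg at hz
      have hss : ∀ i : Fin n, ∃ s : Fin n, f (some (i, i)) = some (s, s) := by
        intro i
        have h := hf (some (i, i)) (some (i, i))
        rw [mul_match] at h
        cases hfi : f (some (i, i)) with
        | none => exact absurd hfi (hz _)
        | some q =>
          obtain ⟨a, b⟩ := q
          rw [hfi] at h
          by_cases hba : b = a
          · subst hba; exact ⟨b, rfl⟩
          · rw [mul_mismatch _ _ hba] at h
            exact nomatch h
      choose σ hσ using hss
      have key : ∀ i j : Fin n, f (some (i, j)) = some (σ i, σ j) := by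
        intro i j
        cases hij : f (some (i, j)) with
        | none => exact absurd hij (hz _)
        | some q =>
          obtain ⟨a, b⟩ := q
          have h1 := hf (some (i, i)) (some (i, j))
          have h2 := hf (some (i, j)) (some (j, j))
          rw [mul_match, hσ i, hij] at h1
          rw [mul_match, hσ j, hij] at h2
          have ha : σ i = a := by
            by_contra hne
            rw [mul_mismatch _ _ hne] at h1
            exact nomatch h1
          have hb : b = σ j := by
            by_contra hne
            rw [mul_mismatch _ _ hne] at h2
            exact nomatch h2
          subst ha; subst hb; rfl
      have hσinj : Function.Injective σ := by
        intro i j hij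
        by_contra hne
        have h := hf (some (i, i)) (some (j, j))
        rw [mul_mismatch _ _ hne, hθ, hσ i, hσ j, hij, mul_match] at h
        exact nomatch h
      have hσsurj : Function.Surjective σ := Finite.injective_iff_surjective.mp hσinj
      constructor
      · intro x y hxy
        cases x with
        | none =>
          cases y with
          | none => rfl
          | some p =>
            obtain ⟨a, b⟩ := p
            rw [hθ, key] at hxy
            exact nomatch hxy
        | some p =>
          obtain ⟨a, b⟩ := p
          cases y with
          | none =>
            rw [hθ, key] at hxy
            exact nomatch hxy
          | some q =>
            obtain ⟨c, d⟩ := q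
            rw [key, key] at hxy
            simp only [Option.some.injEq, Prod.mk.injEq] at hxy
            rw [hσinj hxy.1, hσinj hxy.2]
      · intro y
        cases y with
        | none => exact ⟨none, hθ⟩
        | some q =>
          obtain ⟨a, b⟩ := q
          obtain ⟨i, hi⟩ := hσsurj a
          obtain ⟨j, hj⟩ := hσsurj b
          exact ⟨some (i, j), by rw [key, hi, hj]⟩
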